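/- arXiv:1408.0385 — 4 statements merged into one kernel-verified Lean document; each statement's English description precedes it below -/
import Mathlib

section
/- Let Φ₁, Φ₂ be doubling Young functions such that ∫^∞ dt/Φᵢ(t) < ∞ for i = 1, 2. Then there exists a doubling Young function Φ with Φ(t) ≤ min{Φ₁(t), Φ₂(t)} for all t, ∫^∞ dt/Φ(t) < ∞, and moreover there exists c > 0 such that Φ(t) ≥ c·min{Φ₁(t), Φ₂(t)} for all sufficiently large t. -/
/-!
The minimum `m = min Φ₁ Φ₂` of two Young functions need not be convex, but `m(t)/t` is still
nondecreasing, since each `Φᵢ(t)/t` is (convexity and `Φᵢ(0) = 0`). Hence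
`Φ(t) = ∫₀ᵗ m(s)/s ds` has a nondecreasing derivative, so it is a Young function, and comparing
the integrand with its values at the endpoints gives `m(t/2) ≤ Φ(t) ≤ m(t)`. The doubling of `m`
turns this into `m ≤ C Φ` for large `t`, which yields the doubling of `Φ`, and
`1/Φ(t) ≤ 1/m(t/2) ≤ 1/Φ₁(t/2) + 1/Φ₂(t/2)` yields the integrability of `1/Φ`.
-/

open Set MeasureTheory

noncomputable section

/-- A Young function: convex, increasing on `[0,∞)`, vanishing at `0`. -/
def IsYoung (Φ : ℝ → ℝ) : Prop :=
  ConvexOn ℝ (Ici 0) Φ ∧ MonotoneOn Φ (Ici 0) ∧ Φ 0 = 0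

/-- A doubling (Δ₂) function: `Φ(2t) ≤ C Φ(t)` for all sufficiently large `t`. -/
def Doubling (Φ : ℝ → ℝ) : Prop :=
  ∃ C : ℝ, ∃ t₀ : ℝ, ∀ t ≥ t₀, Φ (2 * t) ≤ C * Φ t

open Filter

lemma IsYoung.nonneg {Φ : ℝ → ℝ} (h : IsYoung Φ) {t : ℝ} (ht : 0 ≤ t) : 0 ≤ Φ t :=
  h.2.2 ▸ h.2.1 self_mem_Ici ht ht

lemma IsYoung.eventually_nonneg {Φ : ℝ → ℝ} (h : IsYoung Φ) : ∀ᶠ t in atTop, 0 ≤ Φ t :=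
  (eventually_ge_atTop 0).mono fun _ ↦ h.nonneg

lemma IsYoung.monotoneOn_div {Φ : ℝ → ℝ} (h : IsYoung Φ) :
    MonotoneOn (fun s ↦ Φ s / s) (Ici 0) := by
  intro s hs t ht hst
  rcases (mem_Ici.mp hs).eq_or_lt with rfl | hs₀
  · simpa using div_nonneg (h.nonneg ht) ht
  · simpa [h.2.2] using h.1.secant_mono self_mem_Ici hs ht hs₀.ne' (hs₀.trans_le hst).ne' hst

lemma IsYoung.monotoneOn_min_div {Φ₁ Φ₂ : ℝ → ℝ} (h₁ : IsYoung Φ₁) (h₂ : IsYoung Φ₂) :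
    MonotoneOn (fun s ↦ min (Φ₁ s) (Φ₂ s) / s) (Ici 0) :=
  (h₁.monotoneOn_div.min h₂.monotoneOn_div).congr fun _ hs ↦ min_div_div_right hs _ _

lemma one_div_min_le_add {x y : ℝ} (hx : 0 ≤ x) (hy : 0 ≤ y) :
    1 / min x y ≤ 1 / x + 1 / y := by
  rcases le_total x y with h | h
  · rw [min_eq_left h]; linarith [one_div_nonneg.2 hy]
  · rw [min_eq_right h]; linarith [one_div_nonneg.2 hx]

lemma MonotoneOn.aestronglyMeasurable_one_div {f : ℝ → ℝ} {s : Set ℝ} (hf : MonotoneOn f s)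
    (hs : MeasurableSet s) : AEStronglyMeasurable (fun t ↦ 1 / f t) (volume.restrict s) :=
  ((aemeasurable_restrict_of_monotoneOn hs hf).const_div 1).aestronglyMeasurable

lemma IsYoung.integrableOn_one_div_min {Φ₁ Φ₂ : ℝ → ℝ} (h₁ : IsYoung Φ₁) (h₂ : IsYoung Φ₂)
    (hi₁ : ∃ a : ℝ, IntegrableOn (fun t ↦ 1 / Φ₁ t) (Ioi a))
    (hi₂ : ∃ a : ℝ, IntegrableOn (fun t ↦ 1 / Φ₂ t) (Ioi a)) :
    ∃ a : ℝ, IntegrableOn (fun t ↦ 1 / min (Φ₁ t) (Φ₂ t)) (Ioi a) := by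
  obtain ⟨a₁, ha₁⟩ := hi₁
  obtain ⟨a₂, ha₂⟩ := hi₂
  set a := max (max a₁ a₂) 0
  have ha : Ioi a ⊆ Ici 0 := fun t ht ↦ mem_Ici.2 ((le_max_right _ 0).trans (le_of_lt ht))
  refine ⟨a, Integrable.mono' ((ha₁.mono_set ?_).add (ha₂.mono_set ?_)) ?_ ?_⟩
  · exact Ioi_subset_Ioi ((le_max_left _ _).trans (le_max_left _ _))
  · exact Ioi_subset_Ioi ((le_max_right _ _).trans (le_max_left _ _))
  · exact ((h₁.2.1.min h₂.2.1).mono ha).aestronglyMeasurable_one_div measurableSet_Ioi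
  · refine (ae_restrict_iff' measurableSet_Ioi).mpr (Eventually.of_forall fun t ht ↦ ?_)
    have h₁t := h₁.nonneg (ha ht)
    have h₂t := h₂.nonneg (ha ht)
    rw [Real.norm_of_nonneg (one_div_nonneg.2 (le_min h₁t h₂t))]
    exact one_div_min_le_add h₁t h₂t

lemma doubling_iff {f : ℝ → ℝ} : Doubling f ↔ ∃ C, ∀ᶠ t in atTop, f (2 * t) ≤ C * f t := by
  simp only [Doubling, eventually_atTop]

lemma Doubling.exists_pos {f : ℝ → ℝ} (hf : Doubling f) (hf₀ : ∀ᶠ t in atTop, 0 ≤ f t) :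
    ∃ C > 0, ∀ᶠ t in atTop, f (2 * t) ≤ C * f t := by
  obtain ⟨C, hC⟩ := doubling_iff.mp hf
  refine ⟨max C 1, by positivity, ?_⟩
  filter_upwards [hC, hf₀] with t hCt hft
  exact hCt.trans (mul_le_mul_of_nonneg_right (le_max_left _ _) hft)

lemma Doubling.min {f g : ℝ → ℝ} (hf : Doubling f) (hg : Doubling g)
    (hf₀ : ∀ᶠ t in atTop, 0 ≤ f t) (hg₀ : ∀ᶠ t in atTop, 0 ≤ g t) :
    Doubling (fun t ↦ min (f t) (g t)) := by
  obtain ⟨C, -, hC⟩ := hf.exists_pos hf₀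
  obtain ⟨D, -, hD⟩ := hg.exists_pos hg₀
  refine doubling_iff.mpr ⟨max C D, ?_⟩
  filter_upwards [hC, hD, hf₀, hg₀] with t hCt hDt hft hgt
  rcases le_total (f t) (g t) with h | h
  · rw [min_eq_left h]
    exact min_le_of_left_le (hCt.trans (mul_le_mul_of_nonneg_right (le_max_left _ _) hft))
  · rw [min_eq_right h]
    exact min_le_of_right_le (hDt.trans (mul_le_mul_of_nonneg_right (le_max_right _ _) hgt))

section MonotoneIntegrand

variable {ψ : ℝ → ℝ} {a b : ℝ}

lemma MonotoneOn.sub_mul_le_integral (hψ : MonotoneOn ψ (Icc a b)) (hab : a ≤ b) :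
    (b - a) * ψ a ≤ ∫ s in a..b, ψ s := by
  have hint : IntervalIntegrable ψ volume a b := (uIcc_of_le hab ▸ hψ).intervalIntegrable
  simpa [mul_comm] using intervalIntegral.integral_mono_on hab intervalIntegrable_const hint
    fun x hx ↦ hψ (left_mem_Icc.2 hab) hx hx.1

lemma MonotoneOn.integral_le_sub_mul (hψ : MonotoneOn ψ (Icc a b)) (hab : a ≤ b) :
    ∫ s in a..b, ψ s ≤ (b - a) * ψ b := by
  have hint : IntervalIntegrable ψ volume a b := (uIcc_of_le hab ▸ hψ).intervalIntegrable
  simpa [mul_comm] using intervalIntegral.integral_mono_on hab hint intervalIntegrable_const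
    fun x hx ↦ hψ hx (right_mem_Icc.2 hab) hx.2

lemma MonotoneOn.integral_sub_integral (hψ : MonotoneOn ψ (Ici a)) {x y : ℝ}
    (hx : a ≤ x) (hy : a ≤ y) :
    (∫ s in a..y, ψ s) - ∫ s in a..x, ψ s = ∫ s in x..y, ψ s := by
  have hint : ∀ {u}, a ≤ u → IntervalIntegrable ψ volume a u := fun hu ↦
    (hψ.mono (ordConnected_Ici.uIcc_subset self_mem_Ici hu)).intervalIntegrable
  exact intervalIntegral.integral_interval_sub_left (hint hy) (hint hx)

lemma MonotoneOn.convexOn_integral (hψ : MonotoneOn ψ (Ici a)) :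
    ConvexOn ℝ (Ici a) (fun t ↦ ∫ s in a..t, ψ s) := by
  refine convexOn_iff_slope_mono_adjacent.mpr ⟨convex_Ici a, fun x y z hx hz hxy hyz ↦ ?_⟩
  have hy : a ≤ y := le_trans hx hxy.le
  have hsub : ∀ {u v : ℝ}, a ≤ u → Icc u v ⊆ Ici a := fun hu _ hs ↦ hu.trans hs.1
  rw [hψ.integral_sub_integral hx hy, hψ.integral_sub_integral hy (hy.trans hyz.le),
    div_le_div_iff₀ (sub_pos.2 hxy) (sub_pos.2 hyz)]
  calc (∫ s in x..y, ψ s) * (z - y)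
      ≤ (y - x) * ψ y * (z - y) := mul_le_mul_of_nonneg_right
        ((hψ.mono (hsub hx)).integral_le_sub_mul hxy.le) (sub_nonneg.2 hyz.le)
    _ = (z - y) * ψ y * (y - x) := by ring
    _ ≤ (∫ s in y..z, ψ s) * (y - x) := mul_le_mul_of_nonneg_right
        ((hψ.mono (hsub hy)).sub_mul_le_integral hyz.le) (sub_nonneg.2 hxy.le)

end MonotoneIntegrand

/-- Since `m 0 / 0 = 0`, the hypothesis `MonotoneOn (fun s ↦ m s / s) (Ici 0)` used below says
that `m s / s` is nonnegative and nondecreasing on `(0, ∞)`. -/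
def slopeIntegral (m : ℝ → ℝ) (t : ℝ) : ℝ := ∫ s in (0 : ℝ)..t, m s / s

section SlopeIntegral

variable {m : ℝ → ℝ} {t : ℝ}

lemma div_nonneg_of_monotoneOn_div (hψ : MonotoneOn (fun s ↦ m s / s) (Ici 0)) (ht : 0 ≤ t) :
    0 ≤ m t / t := by
  simpa using hψ self_mem_Ici ht ht

lemma nonneg_of_monotoneOn_div (hψ : MonotoneOn (fun s ↦ m s / s) (Ici 0)) (ht : 0 < t) :
    0 ≤ m t :=
  div_mul_cancel₀ (m t) ht.ne' ▸ mul_nonneg (div_nonneg_of_monotoneOn_div hψ ht.le) ht.le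

lemma isYoung_slopeIntegral (hψ : MonotoneOn (fun s ↦ m s / s) (Ici 0)) :
    IsYoung (slopeIntegral m) := by
  refine ⟨hψ.convexOn_integral, fun x hx y hy hxy ↦ ?_, intervalIntegral.integral_same⟩
  have hdiff : slopeIntegral m y - slopeIntegral m x = _ := hψ.integral_sub_integral hx hy
  have := intervalIntegral.integral_nonneg (μ := volume) hxy fun s hs ↦
    div_nonneg_of_monotoneOn_div hψ ((mem_Ici.mp hx).trans hs.1)
  linarith

lemma slopeIntegral_le (hψ : MonotoneOn (fun s ↦ m s / s) (Ici 0)) (ht : 0 < t) :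
    slopeIntegral m t ≤ m t := by
  have := (hψ.mono Icc_subset_Ici_self).integral_le_sub_mul ht.le
  rwa [sub_zero, mul_div_cancel₀ _ ht.ne'] at this

lemma le_slopeIntegral_two_mul (hψ : MonotoneOn (fun s ↦ m s / s) (Ici 0)) (ht : 0 < t) :
    m t ≤ slopeIntegral m (2 * t) := by
  have hlow := (hψ.mono fun _ hs ↦ ht.le.trans hs.1).sub_mul_le_integral (by linarith : t ≤ 2 * t)
  rw [show 2 * t - t = t by ring, mul_div_cancel₀ _ ht.ne',
    ← hψ.integral_sub_integral ht.le (by linarith)] at hlow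
  change m t ≤ slopeIntegral m (2 * t) - slopeIntegral m t at hlow
  linarith [(isYoung_slopeIntegral hψ).nonneg ht.le]

lemma Doubling.exists_le_mul_slopeIntegral (hψ : MonotoneOn (fun s ↦ m s / s) (Ici 0))
    (hm : Doubling m) : ∃ C > 0, ∀ᶠ t in atTop, m t ≤ C * slopeIntegral m t := by
  obtain ⟨C, hC, hmC⟩ :=
    hm.exists_pos ((eventually_gt_atTop 0).mono fun _ ↦ nonneg_of_monotoneOn_div hψ)
  refine ⟨C, hC, ?_⟩
  filter_upwards [(tendsto_id.atTop_div_const two_pos).eventually hmC, eventually_gt_atTop 0]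
    with t hCt ht
  rw [id, mul_div_cancel₀ t two_ne_zero] at hCt
  have := le_slopeIntegral_two_mul hψ (half_pos ht)
  rw [mul_div_cancel₀ t two_ne_zero] at this
  exact hCt.trans (mul_le_mul_of_nonneg_left this hC.le)

lemma doubling_slopeIntegral (hψ : MonotoneOn (fun s ↦ m s / s) (Ici 0)) (hm : Doubling m) :
    Doubling (slopeIntegral m) := by
  obtain ⟨C, hC, hmC⟩ :=
    hm.exists_pos ((eventually_gt_atTop 0).mono fun _ ↦ nonneg_of_monotoneOn_div hψ)
  obtain ⟨D, hD, hmD⟩ := hm.exists_le_mul_slopeIntegral hψ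
  refine doubling_iff.mpr ⟨C * D, ?_⟩
  filter_upwards [hmC, hmD, eventually_gt_atTop 0] with t hCt hDt ht
  calc slopeIntegral m (2 * t) ≤ m (2 * t) := slopeIntegral_le hψ (by linarith)
    _ ≤ C * m t := hCt
    _ ≤ C * (D * slopeIntegral m t) := mul_le_mul_of_nonneg_left hDt hC.le
    _ = C * D * slopeIntegral m t := by ring

lemma slopeIntegral_eq_zero (hzero : ∀ s, 0 < s → m s = 0) (ht : 0 ≤ t) :
    slopeIntegral m t = 0 := by
  rw [slopeIntegral, intervalIntegral.integral_congr (g := fun _ ↦ 0),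
    intervalIntegral.integral_zero]
  intro s hs
  rcases (mem_Ici.mp (ordConnected_Ici.uIcc_subset self_mem_Ici ht hs)).eq_or_lt with rfl | hs₀
  · simp
  · simp [hzero s hs₀]

lemma pos_of_monotoneOn_div (hψ : MonotoneOn (fun s ↦ m s / s) (Ici 0)) {s₀ : ℝ}
    (hs₀ : 0 < s₀) (hm₀ : 0 < m s₀) (ht : s₀ ≤ t) : 0 < m t := by
  have ht₀ := hs₀.trans_le ht
  have hslope : m s₀ / s₀ ≤ m t / t := hψ hs₀.le ht₀.le ht
  exact (div_pos_iff_of_pos_right ht₀).mp ((div_pos hm₀ hs₀).trans_le hslope)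

lemma integrableOn_one_div_slopeIntegral (hψ : MonotoneOn (fun s ↦ m s / s) (Ici 0))
    (hi : ∃ a : ℝ, IntegrableOn (fun t ↦ 1 / m t) (Ioi a)) :
    ∃ a : ℝ, IntegrableOn (fun t ↦ 1 / slopeIntegral m t) (Ioi a) := by
  by_cases hzero : ∀ s, 0 < s → m s = 0
  · refine ⟨0, integrableOn_zero.congr_fun (fun t ht ↦ ?_) measurableSet_Ioi⟩
    simp [slopeIntegral_eq_zero hzero (le_of_lt ht)]
  push Not at hzero
  obtain ⟨s₀, hs₀, hm₀⟩ := hzero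
  replace hm₀ := (nonneg_of_monotoneOn_div hψ hs₀).lt_of_ne' hm₀
  obtain ⟨a, ha⟩ := hi
  have hdom : IntegrableOn (fun t ↦ 1 / m (1 / 2 * t)) (Ioi (2 * a)) :=
    (integrableOn_Ioi_comp_mul_left_iff (fun t ↦ 1 / m t) _ one_half_pos).mpr
      (by rwa [show 1 / 2 * (2 * a) = a by ring])
  set b := max (2 * a) (2 * s₀)
  have hb : ∀ t ∈ Ioi b, s₀ ≤ 1 / 2 * t := fun t ht ↦ by
    linarith [mem_Ioi.mp ht, le_max_right (2 * a) (2 * s₀)]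
  have hmono : MonotoneOn (slopeIntegral m) (Ioi b) :=
    (isYoung_slopeIntegral hψ).2.1.mono fun t ht ↦ mem_Ici.2 (by linarith [hb t ht])
  refine ⟨b, Integrable.mono' (hdom.mono_set (Ioi_subset_Ioi (le_max_left _ _)))
    (hmono.aestronglyMeasurable_one_div measurableSet_Ioi)
    ((ae_restrict_iff' measurableSet_Ioi).mpr (Eventually.of_forall fun t ht ↦ ?_))⟩
  have hmpos := pos_of_monotoneOn_div hψ hs₀ hm₀ (hb t ht)
  have hle := le_slopeIntegral_two_mul hψ (hs₀.trans_le (hb t ht))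
  rw [show 2 * (1 / 2 * t) = t by ring] at hle
  rw [Real.norm_of_nonneg (one_div_nonneg.2 (hmpos.le.trans hle))]
  exact one_div_le_one_div_of_le hmpos hle

end SlopeIntegral

/-- Given two doubling Young functions `Φ₁, Φ₂` with `∫^∞ dt/Φᵢ(t) < ∞`, there is a
doubling Young function `Φ ≤ min{Φ₁, Φ₂}` with `∫^∞ dt/Φ(t) < ∞` and
`Φ(t) ≥ c·min{Φ₁(t), Φ₂(t)}` for all sufficiently large `t`. -/
theorem doubling_young_min
    (Φ₁ Φ₂ : ℝ → ℝ) (h₁ : IsYoung Φ₁) (h₂ : IsYoung Φ₂)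
    (hd₁ : Doubling Φ₁) (hd₂ : Doubling Φ₂)
    (hi₁ : ∃ a : ℝ, IntegrableOn (fun t => 1 / Φ₁ t) (Ioi a))
    (hi₂ : ∃ a : ℝ, IntegrableOn (fun t => 1 / Φ₂ t) (Ioi a)) :
    ∃ Φ : ℝ → ℝ, IsYoung Φ ∧ Doubling Φ ∧
      (∀ t, 0 ≤ t → Φ t ≤ min (Φ₁ t) (Φ₂ t)) ∧
      (∃ a : ℝ, IntegrableOn (fun t => 1 / Φ t) (Ioi a)) ∧
      ∃ c : ℝ, 0 < c ∧ ∃ t₀ : ℝ, ∀ t ≥ t₀, c * min (Φ₁ t) (Φ₂ t) ≤ Φ t := by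
  have hψ := h₁.monotoneOn_min_div h₂
  have hm := hd₁.min hd₂ h₁.eventually_nonneg h₂.eventually_nonneg
  obtain ⟨C, hC, hmC⟩ := hm.exists_le_mul_slopeIntegral hψ
  obtain ⟨t₀, ht₀⟩ := eventually_atTop.mp hmC
  refine ⟨slopeIntegral _, isYoung_slopeIntegral hψ, doubling_slopeIntegral hψ hm, fun t ht ↦ ?_,
    integrableOn_one_div_slopeIntegral hψ (h₁.integrableOn_one_div_min h₂ hi₁ hi₂),
    C⁻¹, inv_pos.2 hC, t₀, fun t ht ↦ (inv_mul_le_iff₀ hC).mpr (ht₀ t ht)⟩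
  rcases ht.eq_or_lt with rfl | ht
  · simp [slopeIntegral, h₁.2.2, h₂.2.2]
  · exact slopeIntegral_le hψ ht
end
end

section
/- Let φ:(0,∞)→[0,∞) be a bounded decreasing function with ‖φ‖₁ = ∫₀^∞ φ(t) dt < ∞. Then there exists a bounded decreasing convex C¹ function m:[0,∞)→[0,∞) with m(0) ≤ 4·‖φ‖₁ such that −m'(t) ≥ φ(t) for all t > 0, −m'(0+) ≤ 4·φ(0+), and the function B(x,y) := x²·m(y) is convex on ℝ×(0,∞); moreover −m' is convex. -/
open MeasureTheory Set

/-!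
The majorant is `m y = 4 ∫₀^∞ ℓ(r)² / (ℓ(r) + y) dr`, where `ℓ(r) = |{φ > r}|` is the distribution
function of `φ`. Each layer `y ↦ c² / (c + y)` is nonnegative, decreasing and convex with value `c`
at `0`, its slope `-c² / (c + y)²` has convex absolute value, and `x² c² / (c + y)` is convex in
`(x, y)` as the perspective `(cx)² / (c + y)` of a square; all of this passes to the integral, and
the layer-cake formula gives `m 0 = 4 ‖φ‖₁`. The absolute slope `c² / (c + t)²` is at most `1`, and
at least `1/4` as soon as `c ≥ t`, which holds for `c = ℓ(r)` whenever `r < φ t` because `φ` is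
decreasing; since `ℓ` vanishes beyond `sup φ`, this yields `φ t ≤ -m'(t) ≤ 4 sup φ`.
-/

theorem convexOn_sq_div : ConvexOn ℝ (univ ×ˢ Ioi 0) (fun p : ℝ × ℝ => p.1 ^ 2 / p.2) := by
  refine ⟨convex_univ.prod (convex_Ioi 0), ?_⟩
  rintro ⟨x₁, U⟩ ⟨-, hU : 0 < U⟩ ⟨x₂, V⟩ ⟨-, hV : 0 < V⟩ a b ha hb hab
  have hW : 0 < a * U + b * V := by
    rcases ha.eq_or_lt with rfl | ha
    · simp only [zero_add] at hab; subst hab; simpa using hV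
    · positivity
  simp only [Prod.smul_mk, Prod.mk_add_mk, smul_eq_mul]
  rw [mul_div_assoc', mul_div_assoc', div_add_div _ _ hU.ne' hV.ne',
    div_le_div_iff₀ hW (by positivity)]
  -- cross-multiplied, the two sides differ by `a b (x₁ V - x₂ U)²`
  nlinarith [mul_nonneg (mul_nonneg ha hb) (sq_nonneg (x₁ * V - x₂ * U)), hU, hV]

noncomputable def layer (c y : ℝ) : ℝ := c ^ 2 / (c + y)

noncomputable def layerSlope (c y : ℝ) : ℝ := c ^ 2 / (c + y) ^ 2

section Layer

variable {c y : ℝ}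

theorem layer_nonneg (hc : 0 ≤ c) (hy : 0 ≤ y) : 0 ≤ layer c y := by
  unfold layer; positivity

theorem layer_le_self (hc : 0 ≤ c) (hy : 0 ≤ y) : layer c y ≤ c := by
  unfold layer
  rcases hc.eq_or_lt with rfl | hc
  · simp
  · rw [div_le_iff₀ (by linarith)]; nlinarith

@[simp] theorem layer_zero_right (c : ℝ) : layer c 0 = c := by
  simp [layer, sq, mul_self_div_self]

@[simp] theorem layer_zero_left : layer 0 = 0 := by
  ext y; simp [layer]

theorem measurable_layer (y : ℝ) : Measurable (layer · y) := by
  unfold layer; fun_prop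

theorem measurable_layerSlope (y : ℝ) : Measurable (layerSlope · y) := by
  unfold layerSlope; fun_prop

theorem hasDerivAt_layer (h : c + y ≠ 0) : HasDerivAt (layer c) (-layerSlope c y) y := by
  have := (hasDerivAt_const y (c ^ 2)).div ((hasDerivAt_id' y).const_add c) h
  exact this.congr_deriv (by simp only [layerSlope]; ring)

theorem continuousOn_layer (hc : 0 ≤ c) : ContinuousOn (layer c) (Ici 0) := by
  rcases hc.eq_or_lt with rfl | hc
  · rw [layer_zero_left]; exact continuousOn_const
  · exact fun y (hy : 0 ≤ y) => (hasDerivAt_layer (by linarith)).continuousAt.continuousWithinAt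

theorem convexOn_layer (hc : 0 ≤ c) : ConvexOn ℝ (Ici 0) (layer c) := by
  rcases hc.eq_or_lt with rfl | hc
  · rw [layer_zero_left]; exact convexOn_const 0 (convex_Ici 0)
  refine ⟨convex_Ici 0, fun y₁ (hy₁ : 0 ≤ y₁) y₂ (hy₂ : 0 ≤ y₂) a b ha hb hab => ?_⟩
  have := convexOn_sq_div.2 (x := (c, c + y₁)) (y := (c, c + y₂))
    ⟨trivial, show 0 < c + y₁ by linarith⟩ ⟨trivial, show 0 < c + y₂ by linarith⟩ ha hb hab
  obtain rfl : b = 1 - a := by linarith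
  simp only [Prod.smul_mk, Prod.mk_add_mk, smul_eq_mul] at this ⊢
  refine le_of_eq_of_le ?_ this
  simp only [layer]; ring

theorem convexOn_sq_mul_layer (hc : 0 ≤ c) :
    ConvexOn ℝ (univ ×ˢ Ici 0) (fun p : ℝ × ℝ => p.1 ^ 2 * layer c p.2) := by
  rcases hc.eq_or_lt with rfl | hc
  · simpa using convexOn_const (0 : ℝ) (convex_univ.prod (convex_Ici (0 : ℝ)))
  refine ⟨convex_univ.prod (convex_Ici 0), ?_⟩
  rintro ⟨x₁, y₁⟩ ⟨-, hy₁ : 0 ≤ y₁⟩ ⟨x₂, y₂⟩ ⟨-, hy₂ : 0 ≤ y₂⟩ a b ha hb hab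
  have := convexOn_sq_div.2 (x := (c * x₁, c + y₁)) (y := (c * x₂, c + y₂))
    ⟨trivial, show 0 < c + y₁ by linarith⟩ ⟨trivial, show 0 < c + y₂ by linarith⟩ ha hb hab
  obtain rfl : b = 1 - a := by linarith
  simp only [Prod.smul_mk, Prod.mk_add_mk, smul_eq_mul] at this ⊢
  refine le_of_eq_of_le ?_ (this.trans_eq ?_) <;> (simp only [layer]; ring)

theorem layerSlope_nonneg (c y : ℝ) : 0 ≤ layerSlope c y := by
  unfold layerSlope; positivity

theorem layerSlope_le_div (hc : 0 ≤ c) (hy : 0 < y) : layerSlope c y ≤ c / y := by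
  unfold layerSlope
  rcases hc.eq_or_lt with rfl | hc
  · simp
  · rw [div_le_div_iff₀ (by positivity) hy]
    nlinarith [mul_pos (mul_pos hc hc) hy, mul_pos hc (mul_pos hy hy), mul_pos (mul_pos hc hc) hc]

theorem layerSlope_le_one (hc : 0 ≤ c) (hy : 0 ≤ y) : layerSlope c y ≤ 1 :=
  div_le_one_of_le₀ (pow_le_pow_left₀ hc (by linarith) 2) (sq_nonneg _)

theorem one_div_four_le_layerSlope (hy : 0 < y) (hyc : y ≤ c) : 1 / 4 ≤ layerSlope c y := by
  unfold layerSlope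
  rw [div_le_div_iff₀ (by norm_num) (pow_pos (by linarith) 2)]
  nlinarith

theorem convexOn_layerSlope (hc : 0 ≤ c) : ConvexOn ℝ (Ioi 0) (layerSlope c) := by
  have := ConvexOn.smul (sq_nonneg c) ((convexOn_zpow (𝕜 := ℝ) (-2)).translate_right c)
  refine (this.subset (fun y (hy : 0 < y) => show 0 < c + y by linarith) (convex_Ioi 0)).congr ?_
  intro y _
  simp [layerSlope, div_eq_mul_inv, zpow_neg]

end Layer

section Integral

variable {α : Type*} [MeasurableSpace α] {μ : Measure α}

theorem convexOn_integral {E : Type*} [AddCommGroup E] [Module ℝ E] {s : Set E}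
    {F : α → E → ℝ} (hs : Convex ℝ s) (hF : ∀ r, ConvexOn ℝ s (F r))
    (hint : ∀ x ∈ s, Integrable (fun r => F r x) μ) :
    ConvexOn ℝ s (fun x => ∫ r, F r x ∂μ) := by
  refine ⟨hs, fun x hx y hy a b ha hb hab => ?_⟩
  have hax := (hint x hx).const_mul a
  have hby := (hint y hy).const_mul b
  calc ∫ r, F r (a • x + b • y) ∂μ ≤ ∫ r, (a * F r x + b * F r y) ∂μ :=
        integral_mono (hint _ (hs hx hy ha hb hab)) (hax.add hby)
          fun r => (hF r).2 hx hy ha hb hab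
    _ = a • ∫ r, F r x ∂μ + b • ∫ r, F r y ∂μ := by
        rw [integral_add hax hby, integral_const_mul, integral_const_mul, smul_eq_mul, smul_eq_mul]

variable {ℓ : α → ℝ} {y : ℝ}

theorem aestronglyMeasurable_layer (hℓ : AEMeasurable ℓ μ) (y : ℝ) :
    AEStronglyMeasurable (fun r => layer (ℓ r) y) μ :=
  ((measurable_layer y).comp_aemeasurable hℓ).aestronglyMeasurable

theorem integrable_layer (hℓ : Integrable ℓ μ) (hℓ₀ : ∀ r, 0 ≤ ℓ r) (hy : 0 ≤ y) :
    Integrable (fun r => layer (ℓ r) y) μ :=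
  hℓ.mono (aestronglyMeasurable_layer hℓ.aemeasurable y)
    (ae_of_all _ fun r => by
      rw [Real.norm_of_nonneg (layer_nonneg (hℓ₀ r) hy), Real.norm_of_nonneg (hℓ₀ r)]
      exact layer_le_self (hℓ₀ r) hy)

theorem integrable_layerSlope (hℓ : Integrable ℓ μ) (hℓ₀ : ∀ r, 0 ≤ ℓ r) (hy : 0 < y) :
    Integrable (fun r => layerSlope (ℓ r) y) μ :=
  (hℓ.div_const y).mono
    ((measurable_layerSlope y).comp_aemeasurable hℓ.aemeasurable).aestronglyMeasurable
    (ae_of_all _ fun r => by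
      rw [Real.norm_of_nonneg (layerSlope_nonneg _ _),
        Real.norm_of_nonneg (div_nonneg (hℓ₀ r) hy.le)]
      exact layerSlope_le_div (hℓ₀ r) hy)

theorem hasDerivAt_integral_layer (hℓ : Integrable ℓ μ) (hℓ₀ : ∀ r, 0 ≤ ℓ r) (hy : 0 < y) :
    HasDerivAt (fun y => ∫ r, layer (ℓ r) y ∂μ) (-∫ r, layerSlope (ℓ r) y ∂μ) y := by
  have hbound : ∀ᵐ r ∂μ, ∀ z ∈ Ioi (y / 2), ‖-layerSlope (ℓ r) z‖ ≤ ℓ r / (y / 2) :=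
    ae_of_all _ fun r z (hz : y / 2 < z) => by
      rw [norm_neg, Real.norm_of_nonneg (layerSlope_nonneg _ _)]
      exact (layerSlope_le_div (hℓ₀ r) (by linarith)).trans
        (div_le_div_of_nonneg_left (hℓ₀ r) (by positivity) hz.le)
  have hdiff : ∀ᵐ r ∂μ, ∀ z ∈ Ioi (y / 2),
      HasDerivAt (fun z => layer (ℓ r) z) (-layerSlope (ℓ r) z) z :=
    ae_of_all _ fun r z (hz : y / 2 < z) => hasDerivAt_layer (by linarith [hℓ₀ r])
  have := hasDerivAt_integral_of_dominated_loc_of_deriv_le (Ioi_mem_nhds (half_lt_self hy))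
    (Filter.Eventually.of_forall (aestronglyMeasurable_layer hℓ.aemeasurable))
    (integrable_layer hℓ hℓ₀ hy.le)
    (integrable_layerSlope hℓ hℓ₀ hy).aestronglyMeasurable.neg hbound (hℓ.div_const _) hdiff
  simpa only [integral_neg] using this.2

theorem continuousOn_integral_layer (hℓ : Integrable ℓ μ) (hℓ₀ : ∀ r, 0 ≤ ℓ r) :
    ContinuousOn (fun y => ∫ r, layer (ℓ r) y ∂μ) (Ici 0) :=
  continuousOn_of_dominated
    (fun y _ => aestronglyMeasurable_layer hℓ.aemeasurable y)
    (fun y (hy : 0 ≤ y) => ae_of_all _ fun r => by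
      rw [Real.norm_of_nonneg (layer_nonneg (hℓ₀ r) hy)]
      exact layer_le_self (hℓ₀ r) hy)
    hℓ (ae_of_all _ fun r => continuousOn_layer (hℓ₀ r))

theorem antitoneOn_integral_layer (hℓ : Integrable ℓ μ) (hℓ₀ : ∀ r, 0 ≤ ℓ r) :
    AntitoneOn (fun y => ∫ r, layer (ℓ r) y ∂μ) (Ici 0) := by
  refine antitoneOn_of_deriv_nonpos (convex_Ici 0) (continuousOn_integral_layer hℓ hℓ₀) ?_ ?_
    <;> simp only [interior_Ici]
  · exact fun y hy => (hasDerivAt_integral_layer hℓ hℓ₀ hy).differentiableAt.differentiableWithinAt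
  · intro y hy
    rw [(hasDerivAt_integral_layer hℓ hℓ₀ hy).deriv, neg_nonpos]
    exact integral_nonneg fun r => layerSlope_nonneg _ _

theorem convexOn_integral_layer (hℓ : Integrable ℓ μ) (hℓ₀ : ∀ r, 0 ≤ ℓ r) :
    ConvexOn ℝ (Ici 0) (fun y => ∫ r, layer (ℓ r) y ∂μ) :=
  convexOn_integral (convex_Ici 0) (fun r => convexOn_layer (hℓ₀ r))
    fun _ hy => integrable_layer hℓ hℓ₀ hy

theorem convexOn_sq_mul_integral_layer (hℓ : Integrable ℓ μ) (hℓ₀ : ∀ r, 0 ≤ ℓ r) :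
    ConvexOn ℝ (univ ×ˢ Ici 0) (fun p : ℝ × ℝ => p.1 ^ 2 * ∫ r, layer (ℓ r) p.2 ∂μ) :=
  (convexOn_integral (convex_univ.prod (convex_Ici 0)) (fun r => convexOn_sq_mul_layer (hℓ₀ r))
    fun _ hp => (integrable_layer hℓ hℓ₀ hp.2).const_mul _).congr
    fun _ _ => integral_const_mul _ _

theorem convexOn_integral_layerSlope (hℓ : Integrable ℓ μ) (hℓ₀ : ∀ r, 0 ≤ ℓ r) :
    ConvexOn ℝ (Ioi 0) (fun y => ∫ r, layerSlope (ℓ r) y ∂μ) :=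
  convexOn_integral (convex_Ioi 0) (fun r => convexOn_layerSlope (hℓ₀ r))
    fun _ hy => integrable_layerSlope hℓ hℓ₀ hy

end Integral

section Slope

variable {ℓ : ℝ → ℝ} {t : ℝ}

theorem le_four_mul_integral_layerSlope {s : ℝ}
    (hint : IntegrableOn (fun r => layerSlope (ℓ r) t) (Ioi 0)) (ht : 0 < t) (hs : 0 ≤ s)
    (hℓ : ∀ r ∈ Ioo 0 s, t ≤ ℓ r) :
    s ≤ 4 * ∫ r in Ioi 0, layerSlope (ℓ r) t := by
  calc s = 4 * ∫ _ in Ioo 0 s, (1 / 4 : ℝ) := by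
        rw [setIntegral_const, Real.volume_real_Ioo_of_le hs, smul_eq_mul]; ring
    _ ≤ 4 * ∫ r in Ioo 0 s, layerSlope (ℓ r) t := by
        refine mul_le_mul_of_nonneg_left ?_ (by norm_num)
        exact setIntegral_mono_on (by simp) (hint.mono_set Ioo_subset_Ioi_self) measurableSet_Ioo
          fun r hr => one_div_four_le_layerSlope ht (hℓ r hr)
    _ ≤ 4 * ∫ r in Ioi 0, layerSlope (ℓ r) t := by
        refine mul_le_mul_of_nonneg_left ?_ (by norm_num)
        exact setIntegral_mono_set hint (ae_of_all _ fun r => layerSlope_nonneg _ _)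
          Ioo_subset_Ioi_self.eventuallyLE

theorem integral_layerSlope_le {S : ℝ} (hS : 0 ≤ S) (hℓ₀ : ∀ r, 0 ≤ ℓ r) (ht : 0 ≤ t)
    (hℓ : ∀ r, S ≤ r → ℓ r = 0) :
    ∫ r in Ioi 0, layerSlope (ℓ r) t ≤ S := by
  rw [setIntegral_eq_of_subset_of_forall_sdiff_eq_zero measurableSet_Ioi
    (Ioo_subset_Ioi_self : Ioo (0 : ℝ) S ⊆ Ioi 0) fun r hr => ?_]
  · calc ∫ r in Ioo 0 S, layerSlope (ℓ r) t
        ≤ ‖∫ r in Ioo 0 S, layerSlope (ℓ r) t‖ := Real.le_norm_self _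
      _ ≤ 1 * volume.real (Ioo 0 S) := norm_setIntegral_le_of_norm_le_const (by simp)
          fun r _ => by
            rw [Real.norm_of_nonneg (layerSlope_nonneg _ _)]
            exact layerSlope_le_one (hℓ₀ r) ht
      _ = S := by rw [Real.volume_real_Ioo_of_le hS, one_mul, sub_zero]
  · have hSr : S ≤ r := by
      by_contra h
      exact hr.2 ⟨hr.1, lt_of_not_ge h⟩
    simp [layerSlope, hℓ r hSr]

end Slope

section DistributionFunction

variable {α : Type*} [MeasurableSpace α]

noncomputable def distributionFunction (μ : Measure α) (f : α → ℝ) (r : ℝ) : ℝ :=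
  μ.real {a | r < f a}

variable {μ : Measure α} {f : α → ℝ}

theorem antitone_measure_lt (μ : Measure α) (f : α → ℝ) : Antitone fun r => μ {a | r < f a} :=
  fun _ _ hrs => measure_mono fun _ ha => lt_of_le_of_lt hrs ha

theorem integral_distributionFunction (hf : Integrable f μ) (hf₀ : 0 ≤ᵐ[μ] f) :
    ∫ r in Ioi 0, distributionFunction μ f r = ∫ a, f a ∂μ :=
  (hf.integral_eq_integral_meas_lt hf₀).symm

theorem integrableOn_distributionFunction (hf : Integrable f μ) (hf₀ : 0 ≤ᵐ[μ] f) :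
    IntegrableOn (distributionFunction μ f) (Ioi 0) :=
  integrable_toReal_of_lintegral_ne_top (antitone_measure_lt μ f).measurable.aemeasurable <| by
    rw [← lintegral_eq_lintegral_meas_lt μ hf₀ hf.aemeasurable]
    exact hf.lintegral_lt_top.ne

theorem distributionFunction_eq_zero {r : ℝ} (h : ∀ᵐ a ∂μ, f a ≤ r) :
    distributionFunction μ f r = 0 := by
  have : μ {a | r < f a} = 0 := by simpa only [not_le] using ae_iff.1 h
  simp [distributionFunction, measureReal_def, this]

theorem le_distributionFunction_of_antitoneOn {φ : ℝ → ℝ} {r t : ℝ}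
    (hφ : AntitoneOn φ (Ioi 0)) (hfin : volume.restrict (Ioi 0) {a | r < φ a} ≠ ⊤)
    (ht : 0 < t) (hr : r < φ t) :
    t ≤ distributionFunction (volume.restrict (Ioi 0)) φ r := by
  have hsub : Ioc 0 t ⊆ {a | r < φ a} := fun a ha => hr.trans_le (hφ ha.1 ht ha.2)
  calc t = (volume.restrict (Ioi 0)).real (Ioc 0 t) := by
        rw [measureReal_restrict_apply measurableSet_Ioc, inter_eq_left.2 Ioc_subset_Ioi_self,
          Real.volume_real_Ioc_of_le ht.le, sub_zero]
    _ ≤ _ := measureReal_mono hsub hfin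

end DistributionFunction

/-- Construction of the Bellman function ingredient: given a bounded decreasing
`φ : (0,∞) → [0,∞)` with `∫₀^∞ φ < ∞`, there is a bounded decreasing convex C¹
function `m : [0,∞) → [0,∞)` with `m(0) ≤ 4‖φ‖₁`, `−m'(t) ≥ φ(t)` for `t > 0`,
`−m'(0+) ≤ 4 φ(0+)`, such that `B(x,y) = x² m(y)` is convex; moreover `−m'` is convex. -/
theorem bellman_majorant_exists
    (φ : ℝ → ℝ)
    (hφ_nonneg : ∀ t, 0 < t → 0 ≤ φ t)
    (hφ_dec : AntitoneOn φ (Ioi 0))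
    (hφ_bdd : BddAbove (φ '' Ioi 0))
    (hφ_int : IntegrableOn φ (Ioi 0)) :
    ∃ m : ℝ → ℝ,
      -- m : [0,∞) → [0,∞), bounded, decreasing, convex, C¹
      (∀ y, 0 ≤ y → 0 ≤ m y) ∧
      AntitoneOn m (Ici 0) ∧
      ConvexOn ℝ (Ici 0) m ∧
      ContinuousOn m (Ici 0) ∧
      DifferentiableOn ℝ m (Ioi 0) ∧
      ContinuousOn (deriv m) (Ioi 0) ∧
      -- m(0) ≤ 4 ‖φ‖₁
      m 0 ≤ 4 * ∫ t in Ioi (0 : ℝ), φ t ∧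
      -- −m'(t) ≥ φ(t) for t > 0
      (∀ t, 0 < t → φ t ≤ -(deriv m t)) ∧
      -- −m'(0+) ≤ 4 φ(0+)  (φ(0+) = sup of φ on (0,∞) since φ is decreasing)
      (∀ t, 0 < t → -(deriv m t) ≤ 4 * sSup (φ '' Ioi 0)) ∧
      -- B(x,y) = x² m(y) is convex on ℝ × (0,∞)
      ConvexOn ℝ ((univ : Set ℝ) ×ˢ Ioi (0 : ℝ))
        (fun p : ℝ × ℝ => p.1 ^ 2 * m p.2) ∧
      -- −m' is convex
      ConvexOn ℝ (Ioi 0) (fun t => -(deriv m t)) := by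
  have hφ₀ : 0 ≤ᵐ[volume.restrict (Ioi 0)] φ :=
    (ae_restrict_iff' measurableSet_Ioi).2 (ae_of_all _ hφ_nonneg)
  have hφ_le_sSup (t : ℝ) (ht : 0 < t) : φ t ≤ sSup (φ '' Ioi 0) := le_csSup hφ_bdd ⟨t, ht, rfl⟩
  set ℓ := distributionFunction (volume.restrict (Ioi 0)) φ
  have hℓ₀ (r : ℝ) : 0 ≤ ℓ r := measureReal_nonneg
  have hℓ : IntegrableOn ℓ (Ioi 0) := integrableOn_distributionFunction hφ_int hφ₀
  set M := fun y => ∫ r in Ioi 0, layer (ℓ r) y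
  set G := fun y => ∫ r in Ioi 0, layerSlope (ℓ r) y
  have hm' (t : ℝ) (ht : 0 < t) : HasDerivAt (fun y => 4 * M y) (-(4 * G t)) t := by
    simpa only [mul_neg] using (hasDerivAt_integral_layer hℓ hℓ₀ ht).const_mul 4
  have hG : ConvexOn ℝ (Ioi 0) fun t => 4 * G t :=
    (convexOn_integral_layerSlope hℓ hℓ₀).smul (by norm_num)
  refine ⟨fun y => 4 * M y, fun y hy => ?_, fun y hy z hz hyz => ?_,
    (convexOn_integral_layer hℓ hℓ₀).smul (by norm_num),
    (continuousOn_integral_layer hℓ hℓ₀).const_smul (4 : ℝ),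
    fun t ht => (hm' t ht).differentiableAt.differentiableWithinAt,
    (hG.continuousOn isOpen_Ioi).neg.congr fun t ht => (hm' t ht).deriv, ?_, fun t ht => ?_,
    fun t ht => ?_, ?_, hG.congr fun t ht => by rw [(hm' t ht).deriv, neg_neg]⟩
  · exact mul_nonneg (by norm_num) (integral_nonneg fun r => layer_nonneg (hℓ₀ r) hy)
  · exact mul_le_mul_of_nonneg_left (antitoneOn_integral_layer hℓ hℓ₀ hy hz hyz) (by norm_num)
  · simp only [M, layer_zero_right]
    exact (congrArg (4 * ·) (integral_distributionFunction hφ_int hφ₀)).le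
  · rw [(hm' t ht).deriv, neg_neg]
    exact le_four_mul_integral_layerSlope (integrable_layerSlope hℓ hℓ₀ ht) ht (hφ_nonneg t ht)
      fun r hr => le_distributionFunction_of_antitoneOn hφ_dec
        (hφ_int.measure_gt_lt_top hr.1).ne ht hr.2
  · rw [(hm' t ht).deriv, neg_neg]
    refine mul_le_mul_of_nonneg_left
      (integral_layerSlope_le ((hφ_nonneg 1 one_pos).trans (hφ_le_sSup 1 one_pos)) hℓ₀ ht.le
        fun r hr => distributionFunction_eq_zero ?_) (by norm_num)
    exact (ae_restrict_iff' measurableSet_Ioi).2 <|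
      ae_of_all _ fun a ha => (hφ_le_sSup a ha).trans hr
  · exact (((convexOn_sq_mul_integral_layer hℓ hℓ₀).smul (by norm_num : (0 : ℝ) ≤ 4)).subset
      (prod_mono subset_rfl Ioi_subset_Ici_self) (convex_univ.prod (convex_Ioi 0))).congr
      fun p _ => by simp only [smul_eq_mul]; ring
end

section
/- Let N and N₁ be compactly supported distribution functions taking finitely many values, let ΔN := N₁ − N, N_θ := N + θ·ΔN for θ ∈ [0,1], u_θ := ∫₀^∞ N_θ(t) dt, u_Δ := ∫₀^∞ |ΔN(t)| dt, and Δu := ∫₀^∞ ΔN(t) dt. Then −d²/dθ² [ u*(N_θ) ] ≥ (u_Δ)²/u_θ ≥ (Δu)²/u_θ. -/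
open MeasureTheory Set

noncomputable section

/-- `ψ₀(s) = s·ln(e/s)` (with the value `0` at `s = 0`). -/
def psi0 (s : ℝ) : ℝ := s * Real.log (Real.exp 1 / s)

/-- A distribution function: decreasing on `(0,∞)` with values in `[0,1]`. -/
def IsDistrib (N : ℝ → ℝ) : Prop :=
  (∀ t, 0 < t → 0 ≤ N t ∧ N t ≤ 1) ∧ AntitoneOn N (Ioi 0)

/-- `u(N) = ∫₀^∞ N(t) dt`. -/
def uFn (N : ℝ → ℝ) : ℝ := ∫ t in Ioi (0 : ℝ), N t

/-- `u*(N) = ∫₀^∞ ψ₀(N(t)) dt`. -/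
def ustarFn (N : ℝ → ℝ) : ℝ := ∫ t in Ioi (0 : ℝ), psi0 (N t)

/-!
Since `N` and `N₁` are compactly supported step functions, every integral
`∫₀^∞ g(N t, N₁ t) dt` with `g(0,0) = 0` is a finite sum `∑ c_p g(p)` over the joint values
`p = (a_p, b_p)`, the weight `c_p` being the length of the level set. Along the segment,
`u*(N_ϑ) = ∑ c_p ψ₀(s_p(ϑ))` with `s_p(ϑ) = a_p + ϑ(b_p - a_p)`, and `ψ₀'' = -1/s`, so
`-d²/dθ² u*(N_θ) = ∑ c_p (b_p - a_p)² / s_p(θ)`. Cauchy–Schwarz in Sedrakyan's form against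
`u_θ = ∑ c_p s_p(θ)` gives the first inequality; the second is `|∫ ΔN| ≤ ∫ |ΔN|`.
-/

open Real Filter Topology

theorem setIntegral_comp_eq_sum {X α : Type*} [MeasurableSpace X] {μ : Measure X} {s : Set X}
    {f : X → α} {F : Finset α} (hF : ∀ x ∈ s, f x ∈ F)
    (hmeas : ∀ a ∈ F, MeasurableSet (s ∩ f ⁻¹' {a})) {g : α → ℝ}
    (hfin : ∀ a ∈ F, g a ≠ 0 → μ (s ∩ f ⁻¹' {a}) ≠ ⊤) :
    ∫ x in s, g (f x) ∂μ = ∑ a ∈ F, μ.real (s ∩ f ⁻¹' {a}) * g a := by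
  have hs : s = ⋃ a ∈ F, s ∩ f ⁻¹' {a} := by
    ext x
    simp only [mem_iUnion, mem_inter_iff, mem_preimage, mem_singleton_iff, exists_prop]
    exact ⟨fun hx => ⟨f x, hF x hx, hx, rfl⟩, fun ⟨_, _, hx, _⟩ => hx⟩
  have hdisj : (F : Set α).PairwiseDisjoint fun a => s ∩ f ⁻¹' {a} := fun a _ b _ hab =>
    Disjoint.inter_left' s (Disjoint.inter_right' s ((disjoint_singleton.2 hab).preimage f))
  have hconst : ∀ a ∈ F, EqOn (fun x => g (f x)) (fun _ => g a) (s ∩ f ⁻¹' {a}) :=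
    fun a _ x hx => congrArg g hx.2
  calc ∫ x in s, g (f x) ∂μ = ∫ x in ⋃ a ∈ F, s ∩ f ⁻¹' {a}, g (f x) ∂μ := by rw [← hs]
    _ = ∑ a ∈ F, ∫ x in s ∩ f ⁻¹' {a}, g (f x) ∂μ := by
      refine integral_biUnion_finset F hmeas hdisj fun a ha => ?_
      refine (integrableOn_congr_fun (hconst a ha) (hmeas a ha)).2 ?_
      by_cases hga : g a = 0
      · simp [hga]
      · exact integrableOn_const (hfin a ha hga)
    _ = ∑ a ∈ F, μ.real (s ∩ f ⁻¹' {a}) * g a := by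
      refine Finset.sum_congr rfl fun a ha => ?_
      rw [setIntegral_congr_fun (hmeas a ha) (hconst a ha), setIntegral_const, smul_eq_mul]

theorem measurableSet_inter_preimage_of_antitoneOn {α β : Type*} [TopologicalSpace α]
    [MeasurableSpace α] [OpensMeasurableSpace α] [LinearOrder α] [OrderClosedTopology α]
    [Preorder β] {f : α → β} {s : Set α} {t : Set β} (hs : MeasurableSet s)
    (hf : AntitoneOn f s) (ht : t.OrdConnected) : MeasurableSet (s ∩ f ⁻¹' t) := by
  obtain ⟨u, hu, heq⟩ := ht.preimage_antitoneOn hf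
  rw [heq]
  exact hs.inter hu.measurableSet

theorem IsDistrib.exists_integral_eq_sum {N N₁ : ℝ → ℝ} (hN : IsDistrib N) (hN₁ : IsDistrib N₁)
    (hNsupp : ∃ T : ℝ, ∀ t ≥ T, N t = 0) (hN₁supp : ∃ T : ℝ, ∀ t ≥ T, N₁ t = 0)
    (hNfin : (range N).Finite) (hN₁fin : (range N₁).Finite) :
    ∃ (F : Finset (ℝ × ℝ)) (c : ℝ × ℝ → ℝ), (∀ p ∈ F, 0 ≤ c p ∧ 0 ≤ p.1 ∧ 0 ≤ p.2) ∧
      ∀ g : ℝ → ℝ → ℝ, g 0 0 = 0 →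
        ∫ t in Ioi 0, g (N t) (N₁ t) = ∑ p ∈ F, c p * g p.1 p.2 := by
  obtain ⟨T₀, hT₀⟩ := hNsupp
  obtain ⟨T₁, hT₁⟩ := hN₁supp
  set f : ℝ → ℝ × ℝ := fun t => (N t, N₁ t)
  have hfin : (f '' Ioi 0).Finite := (hNfin.prod hN₁fin).subset <| by
    rintro _ ⟨t, -, rfl⟩
    exact ⟨mem_range_self t, mem_range_self t⟩
  have hanti : AntitoneOn f (Ioi 0) := fun x hx y hy hxy => ⟨hN.2 hx hy hxy, hN₁.2 hx hy hxy⟩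
  have hfiber : ∀ p ≠ ((0 : ℝ), (0 : ℝ)), Ioi 0 ∩ f ⁻¹' {p} ⊆ Ioo 0 (max T₀ T₁) := by
    rintro p hp t ⟨ht, rfl⟩
    refine ⟨ht, lt_of_not_ge fun hT => hp ?_⟩
    exact Prod.ext (hT₀ t (le_of_max_le_left hT)) (hT₁ t (le_of_max_le_right hT))
  refine ⟨hfin.toFinset, fun p => volume.real (Ioi 0 ∩ f ⁻¹' {p}), fun p hp => ?_,
    fun g hg => ?_⟩
  · obtain ⟨t, ht, rfl⟩ := hfin.mem_toFinset.1 hp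
    exact ⟨measureReal_nonneg, (hN.1 t ht).1, (hN₁.1 t ht).1⟩
  · refine setIntegral_comp_eq_sum (g := fun p => g p.1 p.2)
      (fun t ht => hfin.mem_toFinset.2 ⟨t, ht, rfl⟩)
      (fun p _ => measurableSet_inter_preimage_of_antitoneOn measurableSet_Ioi hanti
        ordConnected_singleton) fun p _ hgp => ?_
    refine (measure_mono (hfiber p ?_)).trans_lt measure_Ioo_lt_top |>.ne
    rintro rfl
    exact hgp hg

theorem psi0_hasDerivAt {s : ℝ} (hs : 0 < s) : HasDerivAt psi0 (-log s) s := by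
  have h : HasDerivAt (fun x => x - x * log x) (-log s) s := by
    refine ((hasDerivAt_id' s).sub ((hasDerivAt_id' s).mul (hasDerivAt_log hs.ne'))).congr_deriv
      ?_
    rw [mul_inv_cancel₀ hs.ne']
    ring
  refine h.congr_of_eventuallyEq ?_
  filter_upwards [eventually_gt_nhds hs] with x hx
  rw [psi0, log_div (exp_ne_zero 1) hx.ne', log_exp]
  ring

theorem hasDerivAt_add_mul_sub (a b θ : ℝ) :
    HasDerivAt (fun x => a + x * (b - a)) (b - a) θ := by
  simpa using ((hasDerivAt_id θ).mul_const (b - a)).const_add a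

theorem add_mul_sub_pos_or_eq_zero {a b θ : ℝ} (ha : 0 ≤ a) (hb : 0 ≤ b) (hθ : θ ∈ Ioo 0 1) :
    0 < a + θ * (b - a) ∨ a = 0 ∧ b = 0 := by
  obtain ⟨hθ₀, hθ₁⟩ := hθ
  rcases ha.lt_or_eq with ha | rfl
  · left; nlinarith
  rcases hb.lt_or_eq with hb | rfl
  · left; nlinarith
  · right; simp

-- In the degenerate case `a = b = 0` the derivative formulas below hold through the conventions
-- `log 0 = 0` and `x / 0 = 0`.
theorem hasDerivAt_psi0_segment {a b θ : ℝ} (ha : 0 ≤ a) (hb : 0 ≤ b) (hθ : θ ∈ Ioo 0 1) :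
    HasDerivAt (fun x => psi0 (a + x * (b - a))) (-log (a + θ * (b - a)) * (b - a)) θ := by
  rcases add_mul_sub_pos_or_eq_zero ha hb hθ with hpos | ⟨rfl, rfl⟩
  · exact (psi0_hasDerivAt hpos).comp θ (hasDerivAt_add_mul_sub a b θ)
  · simpa [psi0] using hasDerivAt_const θ (0 : ℝ)

theorem hasDerivAt_neg_log_segment {a b θ : ℝ} (ha : 0 ≤ a) (hb : 0 ≤ b) (hθ : θ ∈ Ioo 0 1) :
    HasDerivAt (fun x => -log (a + x * (b - a)) * (b - a))
      (-((b - a) ^ 2 / (a + θ * (b - a)))) θ := by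
  rcases add_mul_sub_pos_or_eq_zero ha hb hθ with hpos | ⟨rfl, rfl⟩
  · refine (((hasDerivAt_log hpos.ne').comp θ (hasDerivAt_add_mul_sub a b θ)).neg.mul_const
      (b - a)).congr_deriv ?_
    field_simp
  · simpa using hasDerivAt_const θ (0 : ℝ)

theorem iteratedDeriv_two_eq_of_hasDerivAt {f f' : ℝ → ℝ} {f'' x : ℝ} {U : Set ℝ}
    (hU : IsOpen U) (hx : x ∈ U) (hf : ∀ y ∈ U, HasDerivAt f (f' y) y)
    (hf' : HasDerivAt f' f'' x) : iteratedDeriv 2 f x = f'' := by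
  have hderiv : deriv f =ᶠ[𝓝 x] f' := by
    filter_upwards [hU.mem_nhds hx] with y hy
    exact (hf y hy).deriv
  rw [iteratedDeriv_succ, iteratedDeriv_one, hderiv.deriv_eq, hf'.deriv]

theorem iteratedDeriv_two_sum_psi0_segment {ι : Type*} (t : Finset ι) (c a b : ι → ℝ)
    (ha : ∀ i ∈ t, 0 ≤ a i) (hb : ∀ i ∈ t, 0 ≤ b i) {θ : ℝ} (hθ : θ ∈ Ioo 0 1) :
    iteratedDeriv 2 (fun x => ∑ i ∈ t, c i * psi0 (a i + x * (b i - a i))) θ =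
      -∑ i ∈ t, c i * (b i - a i) ^ 2 / (a i + θ * (b i - a i)) := by
  refine iteratedDeriv_two_eq_of_hasDerivAt isOpen_Ioo hθ
    (fun x hx => HasDerivAt.fun_sum fun i hi =>
      (hasDerivAt_psi0_segment (ha i hi) (hb i hi) hx).const_mul (c i))
    ((HasDerivAt.fun_sum fun i hi =>
      (hasDerivAt_neg_log_segment (ha i hi) (hb i hi) hθ).const_mul (c i)).congr_deriv ?_)
  rw [← Finset.sum_neg_distrib]
  exact Finset.sum_congr rfl fun i _ => by ring

theorem sq_sum_mul_div_sum_mul_le {ι : Type*} {t : Finset ι} {w s x : ι → ℝ}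
    (hw : ∀ i ∈ t, 0 ≤ w i) (hs : ∀ i ∈ t, 0 ≤ s i) (hx : ∀ i ∈ t, s i = 0 → x i = 0) :
    (∑ i ∈ t, w i * x i) ^ 2 / ∑ i ∈ t, w i * s i ≤ ∑ i ∈ t, w i * x i ^ 2 / s i := by
  classical
  set t' := t.filter fun i => 0 < w i * s i
  have hsupp : ∀ i ∈ t, w i ≠ 0 → s i ≠ 0 → 0 < w i * s i := fun i hi hwi hsi =>
    mul_pos ((hw i hi).lt_of_ne' hwi) ((hs i hi).lt_of_ne' hsi)
  calc (∑ i ∈ t, w i * x i) ^ 2 / ∑ i ∈ t, w i * s i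
      = (∑ i ∈ t', w i * x i) ^ 2 / ∑ i ∈ t', w i * s i := by
        rw [Finset.sum_filter_of_ne, Finset.sum_filter_of_ne]
        · exact fun i hi h => hsupp i hi (left_ne_zero_of_mul h) (right_ne_zero_of_mul h)
        · exact fun i hi h => hsupp i hi (left_ne_zero_of_mul h)
            (mt (hx i hi) (right_ne_zero_of_mul h))
    _ ≤ ∑ i ∈ t', (w i * x i) ^ 2 / (w i * s i) :=
        Finset.sq_sum_div_le_sum_sq_div _ _ fun i hi => (Finset.mem_filter.1 hi).2
    _ = ∑ i ∈ t', w i * x i ^ 2 / s i := by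
        refine Finset.sum_congr rfl fun i hi => ?_
        have hpos := (Finset.mem_filter.1 hi).2
        have hwi : w i ≠ 0 := left_ne_zero_of_mul hpos.ne'
        have hsi : s i ≠ 0 := right_ne_zero_of_mul hpos.ne'
        field_simp
    _ = ∑ i ∈ t, w i * x i ^ 2 / s i := by
        refine Finset.sum_filter_of_ne fun i hi h => hsupp i hi ?_ ?_
        · exact left_ne_zero_of_mul (left_ne_zero_of_mul h)
        · exact fun hsi => h (by rw [hsi, div_zero])

/-- Concavity of `u*` along segments: for compactly supported distribution
functions `N, N₁` taking finitely many values, with `ΔN = N₁ − N` and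
`N_θ = N + θΔN`, one has `−d²/dθ² u*(N_θ) ≥ u_Δ²/u_θ ≥ (Δu)²/u_θ`. -/
theorem ustar_second_derivative_concavity
    (N N₁ : ℝ → ℝ) (hN : IsDistrib N) (hN₁ : IsDistrib N₁)
    (hNsupp : ∃ T : ℝ, ∀ t ≥ T, N t = 0)
    (hN₁supp : ∃ T : ℝ, ∀ t ≥ T, N₁ t = 0)
    (hNfin : (range N).Finite) (hN₁fin : (range N₁).Finite)
    (θ : ℝ) (hθ : θ ∈ Ioo (0 : ℝ) 1) :
    (uFn (fun t => |N₁ t - N t|)) ^ 2 / uFn (fun t => N t + θ * (N₁ t - N t))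
        ≤ -(iteratedDeriv 2 (fun ϑ => ustarFn (fun t => N t + ϑ * (N₁ t - N t))) θ) ∧
    (uFn (fun t => N₁ t - N t)) ^ 2 / uFn (fun t => N t + θ * (N₁ t - N t))
        ≤ (uFn (fun t => |N₁ t - N t|)) ^ 2 / uFn (fun t => N t + θ * (N₁ t - N t)) := by
  obtain ⟨F, c, hF, hsum⟩ := hN.exists_integral_eq_sum hN₁ hNsupp hN₁supp hNfin hN₁fin
  have hu : uFn (fun t => N t + θ * (N₁ t - N t)) = ∑ p ∈ F, c p * (p.1 + θ * (p.2 - p.1)) :=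
    hsum (fun a b => a + θ * (b - a)) (by ring)
  have huΔ : uFn (fun t => |N₁ t - N t|) = ∑ p ∈ F, c p * |p.2 - p.1| :=
    hsum (fun a b => |b - a|) (by simp)
  have hustar : (fun ϑ => ustarFn (fun t => N t + ϑ * (N₁ t - N t))) =
      fun ϑ => ∑ p ∈ F, c p * psi0 (p.1 + ϑ * (p.2 - p.1)) :=
    funext fun ϑ => hsum (fun a b => psi0 (a + ϑ * (b - a))) (by simp [psi0])
  refine ⟨?_, ?_⟩
  · rw [hu, huΔ, hustar, iteratedDeriv_two_sum_psi0_segment F c Prod.fst Prod.snd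
      (fun p hp => (hF p hp).2.1) (fun p hp => (hF p hp).2.2) hθ, neg_neg]
    have hseg p (hp : p ∈ F) := add_mul_sub_pos_or_eq_zero (hF p hp).2.1 (hF p hp).2.2 hθ
    simpa only [sq_abs] using sq_sum_mul_div_sum_mul_le (s := fun p => p.1 + θ * (p.2 - p.1))
      (x := fun p => |p.2 - p.1|) (fun p hp => (hF p hp).1)
      (fun p hp => (hseg p hp).elim le_of_lt fun ⟨h₁, h₂⟩ => by simp [h₁, h₂])
      fun p hp hs => (hseg p hp).elim (fun h => absurd hs h.ne') fun ⟨h₁, h₂⟩ => by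
        simp [h₁, h₂]
  · have huθ : 0 ≤ uFn (fun t => N t + θ * (N₁ t - N t)) :=
      setIntegral_nonneg measurableSet_Ioi fun t ht => by
        nlinarith [(hN.1 t ht).1, (hN₁.1 t ht).1, hθ.1, hθ.2]
    exact div_le_div_of_nonneg_right
      (sq_le_sq.2 (abs_integral_le_integral_abs.trans (le_abs_self _))) huθ
end
end

section
/- Let 𝒩 be a real affine space, D a convex subset of ℝ×𝒩, and ℬ a function on D that is continuous on every finite-dimensional affine submanifold of D and satisfies the following midpoint concavity-type condition: for all (f,N), (f₊,N₊), (f₋,N₋) ∈ D with f = (f₊+f₋)/2 and N = (N₊+N₋)/2, one has (ℬ(f₊,N₊)+ℬ(f₋,N₋))/2 − ℬ(f,N) ≥ c(f,N)·|f₊−f|² ≥ 0 for a nonnegative function c on D. Then for any n, any f, f₁,…,fₙ ∈ ℝ, γ₁,…,γₙ ≥ 0 and N, N₁,…,Nₙ ∈ 𝒩 with (f_k,N_k) ∈ D, f = Σ_k γ_k·f_k, N = Σ_k γ_k·N_k, and Σ_k γ_k = 1, it holds that −ℬ(f,N) + Σ_k γ_k·ℬ(f_k,N_k) ≥ (1/4)·c(f,N)·(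 Σ_k γ_k·|f_k − f| )². -/
open Set

noncomputable section

private lemma dyadic_mem_aux {T : Set ℝ} (h0 : (0:ℝ) ∈ T) (h1 : (1:ℝ) ∈ T)
    (hm : ∀ a ∈ T, ∀ b ∈ T, (a + b) / 2 ∈ T) :
    ∀ n k : ℕ, k ≤ 2 ^ n → ((k : ℝ) / 2 ^ n) ∈ T := by
  intro n
  induction n with
  | zero =>
    intro k hk
    interval_cases k <;> simpa
  | succ n ih =>
    intro k hk
    rcases Nat.even_or_odd k with ⟨m, hmk⟩ | ⟨m, hmk⟩
    · subst hmk
      have e : ((m + m : ℕ) : ℝ) / 2 ^ (n+1) = (m : ℝ) / 2 ^ n := by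
        push_cast; ring
      rw [e]
      exact ih m (by omega)
    · subst hmk
      have e : ((2*m+1 : ℕ) : ℝ) / 2 ^ (n+1) = ((m:ℝ)/2^n + ((m+1:ℕ):ℝ)/2^n) / 2 := by
        push_cast; ring
      rw [e]
      exact hm _ (ih m (by omega)) _ (ih (m+1) (by omega))

private lemma dyadic_dense_aux {t : ℝ} (ht : t ∈ Icc (0:ℝ) 1) {T : Set ℝ} (hT : IsClosed T)
    (hdy : ∀ n k : ℕ, k ≤ 2 ^ n → ((k : ℝ) / 2 ^ n) ∈ T) : t ∈ T := by
  have h2 : ∀ n : ℕ, (0:ℝ) < 2 ^ n := fun n => by positivity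
  have hb : ∀ n : ℕ, |((⌊t * 2 ^ n⌋₊ : ℝ) / 2 ^ n) - t| ≤ (1/2 : ℝ) ^ n := by
    intro n
    have hnn : 0 ≤ t * 2 ^ n := mul_nonneg ht.1 (h2 n).le
    have hfl : (⌊t * 2 ^ n⌋₊ : ℝ) ≤ t * 2 ^ n := Nat.floor_le hnn
    have hfl2 : t * 2 ^ n - 1 < (⌊t * 2 ^ n⌋₊ : ℝ) := by
      have := Nat.lt_floor_add_one (t * 2 ^ n); linarith
    have e : (⌊t * 2 ^ n⌋₊ : ℝ) / 2 ^ n - t = ((⌊t * 2 ^ n⌋₊ : ℝ) - t * 2 ^ n) / 2 ^ n := by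
      field_simp
    rw [e, abs_div, abs_of_pos (h2 n), div_pow, one_pow]
    exact div_le_div_of_nonneg_right (abs_le.2 ⟨by linarith, by linarith⟩) (h2 n).le
  have htend : Filter.Tendsto (fun n : ℕ => ((⌊t * 2 ^ n⌋₊ : ℝ) / 2 ^ n))
      Filter.atTop (nhds t) := by
    have hgeo : Filter.Tendsto (fun n : ℕ => ((1:ℝ)/2) ^ n) Filter.atTop (nhds 0) :=
      tendsto_pow_atTop_nhds_zero_of_lt_one (by norm_num) (by norm_num)
    have := squeeze_zero_norm (fun n => by rw [Real.norm_eq_abs]; exact hb n) hgeo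
    exact tendsto_sub_nhds_zero_iff.mp this
  refine hT.mem_of_tendsto htend (Filter.Eventually.of_forall fun n => ?_)
  refine hdy n _ (Nat.floor_le_of_le ?_)
  have : t * 2 ^ n ≤ 2 ^ n := by nlinarith [ht.2, h2 n]
  exact_mod_cast this

private lemma convexOn_of_mid_aux {V : Type*} [AddCommGroup V] [Module ℝ V]
    (D : Set (ℝ × V)) (hD : Convex ℝ D) (B : ℝ × V → ℝ)
    (hcont : ∀ (k : ℕ) (A : (Fin k → ℝ) →ᵃ[ℝ] ℝ × V),
      ContinuousOn (fun x => B (A x)) (A ⁻¹' D))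
    (hmidw : ∀ p pp pm : ℝ × V, p ∈ D → pp ∈ D → pm ∈ D →
      p.1 = (pp.1 + pm.1) / 2 → p.2 = (2 : ℝ)⁻¹ • (pp.2 + pm.2) →
      B p ≤ (B pp + B pm) / 2) :
    ConvexOn ℝ D B := by
  refine ⟨hD, fun p hp q hq a b ha hb hab => ?_⟩
  set g : ℝ →ᵃ[ℝ] ℝ × V := AffineMap.lineMap p q with hg
  have hgt : ∀ t : ℝ, g t = (1 - t) • p + t • q := by
    intro t
    simp only [hg, AffineMap.lineMap_apply, vsub_eq_sub, vadd_eq_add]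
    module
  have hgD : ∀ t ∈ Icc (0:ℝ) 1, g t ∈ D := by
    intro t ht
    rw [hgt]
    exact hD hp hq (by linarith [ht.2]) ht.1 (by ring)
  have hφ : ContinuousOn (fun t => B (g t)) {t | g t ∈ D} := by
    have hc1 := hcont 1 (g.comp ((LinearMap.proj (0 : Fin 1) :
        ((Fin 1 → ℝ) →ₗ[ℝ] ℝ)).toAffineMap))
    exact hc1.comp (continuous_pi fun _ => continuous_id).continuousOn
      (fun t ht => ht)
  set T : Set ℝ := {t ∈ Icc (0:ℝ) 1 | B (g t) ≤ (1 - t) * B p + t * B q} with hT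
  have hT0 : (0:ℝ) ∈ T := by
    refine ⟨by norm_num, ?_⟩
    have : g 0 = p := by rw [hgt]; simp
    rw [this]; norm_num
  have hT1 : (1:ℝ) ∈ T := by
    refine ⟨by norm_num, ?_⟩
    have : g 1 = q := by rw [hgt]; simp
    rw [this]; norm_num
  have hTm : ∀ s ∈ T, ∀ u ∈ T, (s + u) / 2 ∈ T := by
    rintro s ⟨hs1, hs2⟩ u ⟨hu1, hu2⟩
    have hmIcc : (s + u) / 2 ∈ Icc (0:ℝ) 1 := by
      constructor <;> [linarith [hs1.1, hu1.1]; linarith [hs1.2, hu1.2]]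
    refine ⟨hmIcc, ?_⟩
    have hkey := hmidw (g ((s + u) / 2)) (g s) (g u)
      (hgD _ hmIcc) (hgD _ hs1) (hgD _ hu1) ?_ ?_
    · linarith
    · rw [hgt, hgt, hgt]
      simp only [Prod.fst_add, Prod.smul_fst, smul_eq_mul]
      ring
    · rw [hgt, hgt, hgt]
      simp only [Prod.snd_add, Prod.smul_snd]
      module
  have hTclosed : IsClosed T := by
    have : T = Icc (0:ℝ) 1 ∩
        (fun t => B (g t) - ((1 - t) * B p + t * B q)) ⁻¹' Iic 0 := by
      ext t
      simp only [hT, mem_inter_iff, mem_setOf_eq, mem_preimage, mem_Iic, sub_nonpos]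
    rw [this]
    refine ContinuousOn.preimage_isClosed_of_isClosed ?_ isClosed_Icc isClosed_Iic
    exact (hφ.mono (fun t ht => hgD t ht)).sub
      ((continuous_const.sub continuous_id).mul continuous_const |>.add
        (continuous_id.mul continuous_const)).continuousOn
  have hbT : b ∈ T :=
    dyadic_dense_aux ⟨hb, by linarith⟩ hTclosed (dyadic_mem_aux hT0 hT1 hTm)
  have hfin := hbT.2
  rw [hgt] at hfin
  have hab' : 1 - b = a := by linarith
  rw [hab'] at hfin
  exact hfin

set_option maxHeartbeats 1000000 in
/-- Abstract convexity lemma (from midpoint estimates to convex combinations):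
if a function `B` on a convex subset `D` of `ℝ × 𝒩` (where `𝒩` is a real affine
space, realized here as a real vector space) is continuous on every
finite-dimensional affine section of `D` and satisfies the midpoint estimate
`(B(f₊,N₊)+B(f₋,N₋))/2 − B(f,N) ≥ c(f,N)|f₊−f|² ≥ 0`, then for every convex
combination `(f,N) = Σ γₖ (fₖ,Nₖ)` one has
`−B(f,N) + Σ γₖ B(fₖ,Nₖ) ≥ (1/4) c(f,N) (Σ γₖ|fₖ−f|)²`. -/
theorem bellman_convex_combination
    {V : Type*} [AddCommGroup V] [Module ℝ V]
    (D : Set (ℝ × V)) (hD : Convex ℝ D)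
    (B c : ℝ × V → ℝ)
    (hc_nonneg : ∀ p ∈ D, 0 ≤ c p)
    -- B is continuous on every finite-dimensional affine submanifold of D,
    -- expressed via affine parametrizations by finite-dimensional spaces
    (hcont : ∀ (k : ℕ) (A : (Fin k → ℝ) →ᵃ[ℝ] ℝ × V),
      ContinuousOn (fun x => B (A x)) (A ⁻¹' D))
    (hmid : ∀ p pp pm : ℝ × V, p ∈ D → pp ∈ D → pm ∈ D →
      p.1 = (pp.1 + pm.1) / 2 → p.2 = (2 : ℝ)⁻¹ • (pp.2 + pm.2) →
      c p * |pp.1 - p.1| ^ 2 ≤ (B pp + B pm) / 2 - B p)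
    (n : ℕ) (γ f : Fin n → ℝ) (Nv : Fin n → V)
    (hγ_nonneg : ∀ k, 0 ≤ γ k) (hγ_sum : ∑ k, γ k = 1)
    (hmem : ∀ k, (f k, Nv k) ∈ D)
    (fb : ℝ) (hfb : fb = ∑ k, γ k * f k)
    (Nb : V) (hNb : Nb = ∑ k, γ k • Nv k) :
    (1 / 4) * c (fb, Nb) * (∑ k, γ k * |f k - fb|) ^ 2
      ≤ -(B (fb, Nb)) + ∑ k, γ k * B (f k, Nv k) := by
  classical
  have hB : ConvexOn ℝ D B := by
    refine convexOn_of_mid_aux D hD B hcont ?_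
    intro p pp pm hp hpp hpm h1 h2
    have h := hmid p pp pm hp hpp hpm h1 h2
    have hc := hc_nonneg p hp
    nlinarith [sq_nonneg |pp.1 - p.1|, mul_nonneg hc (sq_nonneg |pp.1 - p.1|)]
  set pt : Fin n → ℝ × V := fun k => (f k, Nv k) with hpt
  have hmemS : ∀ k, pt k ∈ D := fun k => hmem k
  have hpsum : (fb, Nb) = ∑ k, γ k • pt k := by
    apply Prod.ext
    · rw [Prod.fst_sum, hfb]; simp [hpt]
    · rw [Prod.snd_sum, hNb]; simp [hpt]
  have hpD : (fb, Nb) ∈ D := by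
    rw [hpsum]
    exact hD.sum_mem (fun k _ => hγ_nonneg k) hγ_sum (fun k _ => hmemS k)
  have hJsum : B (fb, Nb) ≤ ∑ k, γ k * B (pt k) := by
    calc B (fb, Nb) = B (∑ k, γ k • pt k) := by rw [← hpsum]
    _ ≤ ∑ k, γ k • B (pt k) :=
        hB.map_sum_le (fun k _ => hγ_nonneg k) hγ_sum (fun k _ => hmemS k)
    _ = ∑ k, γ k * B (pt k) := by simp [smul_eq_mul]
  set d : ℝ := ∑ k, γ k * |f k - fb| with hd
  have hd_nonneg : 0 ≤ d :=
    Finset.sum_nonneg fun k _ => mul_nonneg (hγ_nonneg k) (abs_nonneg _)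
  rcases eq_or_lt_of_le hd_nonneg with hd0 | hdpos
  · rw [← hd0]
    norm_num
    linarith
  -- main case : d > 0
  set S : Finset (Fin n) := Finset.univ.filter (fun k => fb ≤ f k) with hS
  set Sc : Finset (Fin n) := Finset.univ.filter (fun k => ¬ fb ≤ f k) with hSc
  set γp : ℝ := ∑ k ∈ S, γ k with hγp
  set γm : ℝ := ∑ k ∈ Sc, γ k with hγm
  have hsum_split : γp + γm = 1 := by
    rw [hγp, hγm, hS, hSc, Finset.sum_filter_add_sum_filter_not, hγ_sum]
  set dp : ℝ := ∑ k ∈ S, γ k * (f k - fb) with hdp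
  set dm : ℝ := ∑ k ∈ Sc, γ k * (fb - f k) with hdm
  have hdp_eq : dp = ∑ k ∈ S, γ k * |f k - fb| := by
    refine Finset.sum_congr rfl fun k hk => ?_
    rw [hS, Finset.mem_filter] at hk
    rw [abs_of_nonneg (by linarith [hk.2])]
  have hdm_eq : dm = ∑ k ∈ Sc, γ k * |f k - fb| := by
    refine Finset.sum_congr rfl fun k hk => ?_
    rw [hSc, Finset.mem_filter] at hk
    rw [abs_of_neg (by push_neg at hk; linarith [hk.2])]
    ring
  have hd_split : dp + dm = d := by
    rw [hdp_eq, hdm_eq, hd, hS, hSc, Finset.sum_filter_add_sum_filter_not]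
  have hzero : dp - dm = 0 := by
    have h1 : ∑ k, γ k * (f k - fb) = 0 := by
      have e : ∑ k, γ k * (f k - fb) = (∑ k, γ k * f k) - (∑ k, γ k) * fb := by
        rw [Finset.sum_mul, ← Finset.sum_sub_distrib]
        exact Finset.sum_congr rfl fun k _ => by ring
      rw [e, hγ_sum, ← hfb]; ring
    have h2 : dp - dm = ∑ k, γ k * (f k - fb) := by
      rw [← Finset.sum_filter_add_sum_filter_not Finset.univ (fun k => fb ≤ f k)
        (fun k => γ k * (f k - fb)), hdp, hdm, hS, hSc]
      have e : ∑ k ∈ Finset.univ.filter (fun k => ¬ fb ≤ f k), γ k * (fb - f k)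
          = - ∑ k ∈ Finset.univ.filter (fun k => ¬ fb ≤ f k), γ k * (f k - fb) := by
        rw [← Finset.sum_neg_distrib]
        exact Finset.sum_congr rfl fun k _ => by ring
      rw [e]; ring
    rw [h2, h1]
  have hdp_half : dp = d / 2 := by linarith
  have hdm_half : dm = d / 2 := by linarith
  have hγp_pos : 0 < γp := by
    rcases (Finset.sum_nonneg (fun k (_ : k ∈ S) => hγ_nonneg k)).lt_or_eq with h | h
    · exact h
    · exfalso
      have hall : ∀ k ∈ S, γ k = 0 :=
        (Finset.sum_eq_zero_iff_of_nonneg (fun k _ => hγ_nonneg k)).1 h.symm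
      have : dp = 0 := Finset.sum_eq_zero fun k hk => by rw [hall k hk]; ring
      rw [hdp_half] at this; linarith
  have hγm_pos : 0 < γm := by
    rcases (Finset.sum_nonneg (fun k (_ : k ∈ Sc) => hγ_nonneg k)).lt_or_eq with h | h
    · exact h
    · exfalso
      have hall : ∀ k ∈ Sc, γ k = 0 :=
        (Finset.sum_eq_zero_iff_of_nonneg (fun k _ => hγ_nonneg k)).1 h.symm
      have : dm = 0 := Finset.sum_eq_zero fun k hk => by rw [hall k hk]; ring
      rw [hdm_half] at this; linarith
  -- the two averaged points
  set pp : ℝ × V := S.centerMass γ pt with hpp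
  set pm : ℝ × V := Sc.centerMass γ pt with hpm
  have hγp_sum : 0 < ∑ k ∈ S, γ k := hγp ▸ hγp_pos
  have hγm_sum : 0 < ∑ k ∈ Sc, γ k := hγm ▸ hγm_pos
  have hppD : pp ∈ D :=
    hD.centerMass_mem (fun k _ => hγ_nonneg k) hγp_sum (fun k _ => hmemS k)
  have hpmD : pm ∈ D :=
    hD.centerMass_mem (fun k _ => hγ_nonneg k) hγm_sum (fun k _ => hmemS k)
  -- Jensen within groups
  have hJp : γp * B pp ≤ ∑ k ∈ S, γ k * B (pt k) := by
    have h := hB.map_centerMass_le (fun k (_ : k ∈ S) => hγ_nonneg k) hγp_sum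
      (fun k _ => hmemS k)
    simp only [Finset.centerMass, Function.comp, smul_eq_mul, ← hγp] at h
    calc γp * B pp ≤ γp * (γp⁻¹ * ∑ k ∈ S, γ k * B (pt k)) :=
          mul_le_mul_of_nonneg_left h hγp_pos.le
    _ = ∑ k ∈ S, γ k * B (pt k) := by
          rw [← mul_assoc, mul_inv_cancel₀ hγp_pos.ne', one_mul]
  have hJm : γm * B pm ≤ ∑ k ∈ Sc, γ k * B (pt k) := by
    have h := hB.map_centerMass_le (fun k (_ : k ∈ Sc) => hγ_nonneg k) hγm_sum
      (fun k _ => hmemS k)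
    simp only [Finset.centerMass, Function.comp, smul_eq_mul, ← hγm] at h
    calc γm * B pm ≤ γm * (γm⁻¹ * ∑ k ∈ Sc, γ k * B (pt k)) :=
          mul_le_mul_of_nonneg_left h hγm_pos.le
    _ = ∑ k ∈ Sc, γ k * B (pt k) := by
          rw [← mul_assoc, mul_inv_cancel₀ hγm_pos.ne', one_mul]
  -- decomposition of the center point
  have hcomb : γp • pp + γm • pm = (fb, Nb) := by
    have h1 : γp • pp = ∑ k ∈ S, γ k • pt k := by
      rw [hpp]
      simp only [Finset.centerMass, ← hγp]
      rw [smul_smul, mul_inv_cancel₀ hγp_pos.ne', one_smul]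
    have h2 : γm • pm = ∑ k ∈ Sc, γ k • pt k := by
      rw [hpm]
      simp only [Finset.centerMass, ← hγm]
      rw [smul_smul, mul_inv_cancel₀ hγm_pos.ne', one_smul]
    rw [h1, h2, hS, hSc, Finset.sum_filter_add_sum_filter_not, ← hpsum]
  have hcoord1 : γp * pp.1 + γm * pm.1 = fb := by
    have := congrArg Prod.fst hcomb
    simpa [Prod.fst_add, Prod.smul_fst, smul_eq_mul] using this
  have hcoord2 : γp • pp.2 + γm • pm.2 = Nb := by
    have := congrArg Prod.snd hcomb
    simpa [Prod.snd_add, Prod.smul_snd] using this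
  -- first-coordinate estimates
  have hfp_val : pp.1 = γp⁻¹ * ∑ k ∈ S, γ k * f k := by
    rw [hpp]
    simp only [Finset.centerMass, ← hγp, Prod.smul_fst, Prod.fst_sum, smul_eq_mul, hpt]
  have hfm_val : pm.1 = γm⁻¹ * ∑ k ∈ Sc, γ k * f k := by
    rw [hpm]
    simp only [Finset.centerMass, ← hγm, Prod.smul_fst, Prod.fst_sum, smul_eq_mul, hpt]
  have hfp : γp * (pp.1 - fb) = d / 2 := by
    have e : dp = (∑ k ∈ S, γ k * f k) - γp * fb := by
      rw [hdp, hγp, Finset.sum_mul, ← Finset.sum_sub_distrib]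
      exact Finset.sum_congr rfl fun k _ => by ring
    rw [hfp_val]
    rw [hdp_half] at e
    field_simp
    linarith
  have hfm : γm * (fb - pm.1) = d / 2 := by
    have e : dm = γm * fb - (∑ k ∈ Sc, γ k * f k) := by
      rw [hdm, hγm, Finset.sum_mul, ← Finset.sum_sub_distrib]
      exact Finset.sum_congr rfl fun k _ => by ring
    rw [hfm_val]
    rw [hdm_half] at e
    field_simp
    linarith
  have hfp_nonneg : 0 ≤ pp.1 - fb := by
    by_contra hneg
    push_neg at hneg
    have := mul_neg_of_pos_of_neg hγp_pos hneg
    linarith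
  have hfm_nonneg : 0 ≤ fb - pm.1 := by
    by_contra hneg
    push_neg at hneg
    have := mul_neg_of_pos_of_neg hγm_pos hneg
    linarith
  -- the symmetric perturbation
  set m : ℝ := min γp γm with hmdef
  have hm_pos : 0 < m := lt_min hγp_pos hγm_pos
  have hm_le_p : m ≤ γp := min_le_left _ _
  have hm_le_m : m ≤ γm := min_le_right _ _
  set u : ℝ × V := (γp + m) • pp + (γm - m) • pm with hu
  set v : ℝ × V := (γp - m) • pp + (γm + m) • pm with hv
  have huD : u ∈ D := hD hppD hpmD (by linarith) (by linarith) (by linarith)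
  have hvD : v ∈ D := hD hppD hpmD (by linarith) (by linarith) (by linarith)
  have hu1 : u.1 = (γp + m) * pp.1 + (γm - m) * pm.1 := by
    rw [hu]; simp [Prod.fst_add, Prod.smul_fst, smul_eq_mul]
  have hv1 : v.1 = (γp - m) * pp.1 + (γm + m) * pm.1 := by
    rw [hv]; simp [Prod.fst_add, Prod.smul_fst, smul_eq_mul]
  have hcond1 : (fb, Nb).1 = (u.1 + v.1) / 2 := by
    rw [hu1, hv1]; show fb = _; linarith [hcoord1]
  have hcond2 : (fb, Nb).2 = (2 : ℝ)⁻¹ • (u.2 + v.2) := by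
    show Nb = _
    have e : (2 : ℝ)⁻¹ • (u.2 + v.2) = γp • pp.2 + γm • pm.2 := by
      rw [hu, hv]
      simp only [Prod.snd_add, Prod.smul_snd]
      module
    rw [e, hcoord2]
  have hkey := hmid (fb, Nb) u v hpD huD hvD hcond1 hcond2
  have hdiff : u.1 - fb = m * (pp.1 - pm.1) := by
    rw [hu1]; linear_combination hcoord1
  -- lower bound for the displacement
  have hlow : d / 2 ≤ m * (pp.1 - pm.1) := by
    rcases le_total γp γm with h | h
    · have hm_eq : m = γp := min_eq_left h
      rw [hm_eq]
      nlinarith [mul_nonneg hγp_pos.le hfm_nonneg]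
    · have hm_eq : m = γm := min_eq_right h
      rw [hm_eq]
      nlinarith [mul_nonneg hγm_pos.le hfp_nonneg]
  have habs : |u.1 - (fb, Nb).1| = m * (pp.1 - pm.1) := by
    show |u.1 - fb| = _
    rw [hdiff, abs_of_nonneg (by linarith)]
  rw [habs] at hkey
  -- convexity bounds for B u, B v
  have hBu : B u ≤ (γp + m) * B pp + (γm - m) * B pm := by
    have := hB.2 hppD hpmD (by linarith : (0:ℝ) ≤ γp + m)
      (by linarith : (0:ℝ) ≤ γm - m) (by linarith)
    simpa [smul_eq_mul] using this
  have hBv : B v ≤ (γp - m) * B pp + (γm + m) * B pm := by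
    have := hB.2 hppD hpmD (by linarith : (0:ℝ) ≤ γp - m)
      (by linarith : (0:ℝ) ≤ γm + m) (by linarith)
    simpa [smul_eq_mul] using this
  -- assembling
  have hsum_final : γp * B pp + γm * B pm ≤ ∑ k, γ k * B (pt k) := by
    rw [← Finset.sum_filter_add_sum_filter_not Finset.univ (fun k => fb ≤ f k)
      (fun k => γ k * B (pt k))]
    exact add_le_add (by rw [hS] at hJp; exact hJp) (by rw [hSc] at hJm; exact hJm)
  have hstep : c (fb, Nb) * (d / 2) ^ 2 ≤ c (fb, Nb) * (m * (pp.1 - pm.1)) ^ 2 := by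
    apply mul_le_mul_of_nonneg_left _ (hc_nonneg _ hpD)
    exact pow_le_pow_left₀ (by linarith) hlow 2
  have efin : (1 / 4) * c (fb, Nb) * d ^ 2 = c (fb, Nb) * (d / 2) ^ 2 := by ring
  show (1 / 4) * c (fb, Nb) * d ^ 2 ≤ -(B (fb, Nb)) + ∑ k, γ k * B (pt k)
  rw [efin]
  linarith [hstep, hkey, hBu, hBv, hsum_final]
end
end
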